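/- Let A be a real parameter and let H₁(y₁,y₂,x₁,x₂) = (1/2)(x₁² + x₂²) + (A/2)(y₁² + 16 y₂²) + y₁² y₂ + (16/3) y₂³ be the Hénon-Heiles Hamiltonian with ε = 16 and B = 16A. Then the function H₂ = 3x₁⁴ + 6A x₁² y₁² + 12 x₁² y₁² y₂ − 4 x₁ x₂ y₁³ − 4A y₁⁴ y₂ − 4 y₁⁴ y₂² + 3A² y₁⁴ − (2/3) y₁⁶ satisfies {H₁, H₂} = 0, where {·,·} is the canonical Poisson bracket on ℝ⁴ with coordinates (y₁,y₂,x₁,x₂). -/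
import Mathlib


/-- Canonical Poisson bracket on ℝ⁴ with coordinates (y₁,y₂,x₁,x₂), for functions
given in curried form `F y₁ y₂ x₁ x₂`. -/
noncomputable def poissonBracket4 (F G : ℝ → ℝ → ℝ → ℝ → ℝ) (y₁ y₂ x₁ x₂ : ℝ) : ℝ :=
    (deriv (fun t => F y₁ y₂ t x₂) x₁) * (deriv (fun t => G t y₂ x₁ x₂) y₁)
  + (deriv (fun t => F y₁ y₂ x₁ t) x₂) * (deriv (fun t => G y₁ t x₁ x₂) y₂)
  - (deriv (fun t => F t y₂ x₁ x₂) y₁) * (deriv (fun t => G y₁ y₂ t x₂) x₁)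
  - (deriv (fun t => F y₁ t x₁ x₂) y₂) * (deriv (fun t => G y₁ y₂ x₁ t) x₂)

/-- The Hénon–Heiles Hamiltonian with ε = 16, B = 16A Poisson-commutes with the quartic invariant H₂. -/
theorem henonHeiles_case_iii_commutes (A : ℝ) :
    ∀ y₁ y₂ x₁ x₂ : ℝ,
      poissonBracket4
        (fun y₁ y₂ x₁ x₂ =>
          (1/2) * (x₁^2 + x₂^2) + (A/2) * (y₁^2 + 16 * y₂^2) + y₁^2 * y₂ + (16/3) * y₂^3)
        (fun y₁ y₂ x₁ x₂ =>
          3 * x₁^4 + 6 * A * x₁^2 * y₁^2 + 12 * x₁^2 * y₁^2 * y₂ - 4 * x₁ * x₂ * y₁^3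
            - 4 * A * y₁^4 * y₂ - 4 * y₁^4 * y₂^2 + 3 * A^2 * y₁^4 - (2/3) * y₁^6)
        y₁ y₂ x₁ x₂ = 0 := by
  intro y₁ y₂ x₁ x₂
  unfold poissonBracket4
  have dF1 : deriv (fun t : ℝ =>
      (1/2) * (t^2 + x₂^2) + (A/2) * (y₁^2 + 16 * y₂^2) + y₁^2 * y₂ + (16/3) * y₂^3) x₁
      = x₁ :=
    (((((hasDerivAt_pow 2 x₁).add_const (x₂^2)).const_mul ((1:ℝ)/2)).add_const
      ((A/2) * (y₁^2 + 16 * y₂^2))).add_const (y₁^2 * y₂) |>.add_const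
      ((16/3) * y₂^3)).deriv.trans (by push_cast; ring)
  have dF2 : deriv (fun t : ℝ =>
      (1/2) * (x₁^2 + t^2) + (A/2) * (y₁^2 + 16 * y₂^2) + y₁^2 * y₂ + (16/3) * y₂^3) x₂
      = x₂ :=
    (((((hasDerivAt_pow 2 x₂).const_add (x₁^2)).const_mul ((1:ℝ)/2)).add_const
      ((A/2) * (y₁^2 + 16 * y₂^2))).add_const (y₁^2 * y₂) |>.add_const
      ((16/3) * y₂^3)).deriv.trans (by push_cast; ring)
  have dF3 : deriv (fun t : ℝ =>
      (1/2) * (x₁^2 + x₂^2) + (A/2) * (t^2 + 16 * y₂^2) + t^2 * y₂ + (16/3) * y₂^3) y₁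
      = A * y₁ + 2 * y₁ * y₂ :=
    (((((hasDerivAt_pow 2 y₁).add_const (16 * y₂^2)).const_mul (A/2)).const_add
      ((1/2) * (x₁^2 + x₂^2))).add ((hasDerivAt_pow 2 y₁).mul_const y₂) |>.add_const
      ((16/3) * y₂^3)).deriv.trans (by push_cast; ring)
  have dF4 : deriv (fun t : ℝ =>
      (1/2) * (x₁^2 + x₂^2) + (A/2) * (y₁^2 + 16 * t^2) + y₁^2 * t + (16/3) * t^3) y₂
      = 16 * A * y₂ + y₁^2 + 16 * y₂^2 :=
    ((((((hasDerivAt_pow 2 y₂).const_mul (16:ℝ)).const_add (y₁^2)).const_mul (A/2)).const_add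
      ((1/2) * (x₁^2 + x₂^2))).add ((hasDerivAt_id y₂).const_mul (y₁^2)) |>.add
      ((hasDerivAt_pow 3 y₂).const_mul ((16:ℝ)/3))).deriv.trans (by push_cast; ring)
  have dG1 : deriv (fun t : ℝ =>
      3 * x₁^4 + 6 * A * x₁^2 * t^2 + 12 * x₁^2 * t^2 * y₂ - 4 * x₁ * x₂ * t^3
        - 4 * A * t^4 * y₂ - 4 * t^4 * y₂^2 + 3 * A^2 * t^4 - (2/3) * t^6) y₁
      = 12 * A * x₁^2 * y₁ + 24 * x₁^2 * y₁ * y₂ - 12 * x₁ * x₂ * y₁^2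
        - 16 * A * y₁^3 * y₂ - 16 * y₁^3 * y₂^2 + 12 * A^2 * y₁^3 - 4 * y₁^5 :=
    (((hasDerivAt_pow 2 y₁).const_mul (6 * A * x₁^2)).const_add (3 * x₁^4)
      |>.add (((hasDerivAt_pow 2 y₁).const_mul (12 * x₁^2)).mul_const y₂)
      |>.sub ((hasDerivAt_pow 3 y₁).const_mul (4 * x₁ * x₂))
      |>.sub (((hasDerivAt_pow 4 y₁).const_mul (4 * A)).mul_const y₂)
      |>.sub (((hasDerivAt_pow 4 y₁).const_mul (4:ℝ)).mul_const (y₂^2))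
      |>.add ((hasDerivAt_pow 4 y₁).const_mul (3 * A^2))
      |>.sub ((hasDerivAt_pow 6 y₁).const_mul ((2:ℝ)/3))).deriv.trans (by push_cast; ring)
  have dG2 : deriv (fun t : ℝ =>
      3 * x₁^4 + 6 * A * x₁^2 * y₁^2 + 12 * x₁^2 * y₁^2 * t - 4 * x₁ * x₂ * y₁^3
        - 4 * A * y₁^4 * t - 4 * y₁^4 * t^2 + 3 * A^2 * y₁^4 - (2/3) * y₁^6) y₂
      = 12 * x₁^2 * y₁^2 - 4 * A * y₁^4 - 8 * y₁^4 * y₂ :=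
    (((hasDerivAt_id y₂).const_mul (12 * x₁^2 * y₁^2)).const_add
        (3 * x₁^4 + 6 * A * x₁^2 * y₁^2)
      |>.sub_const (4 * x₁ * x₂ * y₁^3)
      |>.sub ((hasDerivAt_id y₂).const_mul (4 * A * y₁^4))
      |>.sub ((hasDerivAt_pow 2 y₂).const_mul (4 * y₁^4))
      |>.add_const (3 * A^2 * y₁^4)
      |>.sub_const ((2/3) * y₁^6)).deriv.trans (by push_cast; ring)
  have dG3 : deriv (fun t : ℝ =>
      3 * t^4 + 6 * A * t^2 * y₁^2 + 12 * t^2 * y₁^2 * y₂ - 4 * t * x₂ * y₁^3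
        - 4 * A * y₁^4 * y₂ - 4 * y₁^4 * y₂^2 + 3 * A^2 * y₁^4 - (2/3) * y₁^6) x₁
      = 12 * x₁^3 + 12 * A * x₁ * y₁^2 + 24 * x₁ * y₁^2 * y₂ - 4 * x₂ * y₁^3 :=
    (((hasDerivAt_pow 4 x₁).const_mul (3:ℝ))
      |>.add (((hasDerivAt_pow 2 x₁).const_mul (6 * A)).mul_const (y₁^2))
      |>.add ((((hasDerivAt_pow 2 x₁).const_mul (12:ℝ)).mul_const (y₁^2)).mul_const y₂)
      |>.sub ((((hasDerivAt_id x₁).const_mul (4:ℝ)).mul_const x₂).mul_const (y₁^3))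
      |>.sub_const (4 * A * y₁^4 * y₂)
      |>.sub_const (4 * y₁^4 * y₂^2)
      |>.add_const (3 * A^2 * y₁^4)
      |>.sub_const ((2/3) * y₁^6)).deriv.trans (by push_cast; ring)
  have dG4 : deriv (fun t : ℝ =>
      3 * x₁^4 + 6 * A * x₁^2 * y₁^2 + 12 * x₁^2 * y₁^2 * y₂ - 4 * x₁ * t * y₁^3
        - 4 * A * y₁^4 * y₂ - 4 * y₁^4 * y₂^2 + 3 * A^2 * y₁^4 - (2/3) * y₁^6) x₂
      = -(4 * x₁ * y₁^3) :=
    ((((hasDerivAt_id x₂).const_mul (4 * x₁)).mul_const (y₁^3)).const_sub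
        (3 * x₁^4 + 6 * A * x₁^2 * y₁^2 + 12 * x₁^2 * y₁^2 * y₂)
      |>.sub_const (4 * A * y₁^4 * y₂)
      |>.sub_const (4 * y₁^4 * y₂^2)
      |>.add_const (3 * A^2 * y₁^4)
      |>.sub_const ((2/3) * y₁^6)).deriv.trans (by push_cast; ring)
  rw [dF1, dF2, dF3, dF4, dG1, dG2, dG3, dG4]
  ring
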